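/- Let f ∈ 𝕋[x] be a nonconstant polynomial in one variable whose constant coefficient is -∞ (i.e. f has no constant monomial). Then for every a ∈ ℝ there exists r ∈ 𝕋 such that f(r) = a^ν, the ghost element of value a. -/

import Mathlib

/-- The extended tropical semiring `𝕋`: tangible reals `(a, false)`,
ghost reals `(a, true)`, and `none` = `-∞`. -/
def T : Type := Option (ℝ × Bool)

namespace T

/-- The tangible element of value `a`. -/
def tang (a : ℝ) : T := some (a, false)

/-- The ghost element `a^ν` of value `a`. -/
def ghost (a : ℝ) : T := some (a, true)

/-- Tropical addition on `𝕋`. -/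
noncomputable def add : T → T → T
  | none, y => y
  | some p, none => some p
  | some (a, s), some (b, t) =>
      if a < b then some (b, t) else if b < a then some (a, s) else some (a, true)

/-- Tropical multiplication on `𝕋`. -/
noncomputable def mul : T → T → T
  | none, _ => none
  | some _, none => none
  | some (a, s), some (b, t) => some (a + b, s || t)

lemma add_assoc' : ∀ x y z : T, add (add x y) z = add x (add y z) := by
  show ∀ x y z : Option (ℝ × Bool), @Eq (Option (ℝ × Bool)) (add (add x y) z) (add x (add y z))
  rintro (_ | ⟨a, s⟩) (_ | ⟨b, t⟩) (_ | ⟨c, u⟩) <;>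
    simp only [add] <;>
    (try unfold T) <;>
    (try split_ifs) <;>
    simp only [add] <;>
    (try unfold T) <;>
    (try split_ifs) <;>
    first
      | rfl
      | (exfalso; linarith)
      | (refine congrArg some ?_; refine Prod.ext ?_ ?_ <;>
          first | rfl | linarith | simp)

lemma add_comm' : ∀ x y : T, add x y = add y x := by
  show ∀ x y : Option (ℝ × Bool), @Eq (Option (ℝ × Bool)) (add x y) (add y x)
  rintro (_ | ⟨a, s⟩) (_ | ⟨b, t⟩) <;>
    simp only [add] <;>
    (try unfold T) <;>
    (try split_ifs) <;>
    first
      | rfl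
      | (exfalso; linarith)
      | (refine congrArg some ?_; refine Prod.ext ?_ ?_ <;>
          first | rfl | linarith | simp)

lemma mul_assoc' : ∀ x y z : T, mul (mul x y) z = mul x (mul y z) := by
  rintro (_ | ⟨a, s⟩) (_ | ⟨b, t⟩) (_ | ⟨c, u⟩) <;>
    simp [mul, add_assoc, Bool.or_assoc] <;> rfl

lemma mul_comm' : ∀ x y : T, mul x y = mul y x := by
  rintro (_ | ⟨a, s⟩) (_ | ⟨b, t⟩) <;> simp [mul, add_comm, Bool.or_comm] <;> rfl

lemma left_distrib' : ∀ x y z : T, mul x (add y z) = add (mul x y) (mul x z) := by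
  show ∀ x y z : Option (ℝ × Bool), @Eq (Option (ℝ × Bool)) (mul x (add y z)) (add (mul x y) (mul x z))
  rintro (_ | ⟨a, s⟩) (_ | ⟨b, t⟩) (_ | ⟨c, u⟩) <;>
    simp only [add, mul] <;>
    (try unfold T) <;>
    (try split_ifs) <;>
    simp only [add, mul] <;>
    (try unfold T) <;>
    (try split_ifs) <;>
    first
      | rfl
      | (exfalso; linarith)
      | (refine congrArg some ?_; refine Prod.ext ?_ ?_ <;>
          first | rfl | linarith | simp)

noncomputable instance : Zero T := ⟨none⟩
noncomputable instance : One T := ⟨some (0, false)⟩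
noncomputable instance : Add T := ⟨add⟩
noncomputable instance : Mul T := ⟨mul⟩

noncomputable instance : CommSemiring T where
  add := (· + ·)
  zero := 0
  add_assoc := add_assoc'
  zero_add := fun x => by cases x <;> rfl
  add_zero := fun x => by cases x <;> rfl
  add_comm := add_comm'
  mul := (· * ·)
  one := 1
  mul_assoc := mul_assoc'
  one_mul := fun x => by
    show mul (some (0, false)) x = x
    rcases x with _ | ⟨a, s⟩ <;> simp [mul] <;> rfl
  mul_one := fun x => by
    show mul x (some (0, false)) = x
    rcases x with _ | ⟨a, s⟩ <;> simp [mul] <;> rfl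
  mul_comm := mul_comm'
  zero_mul := fun x => by cases x <;> rfl
  mul_zero := fun x => by cases x <;> rfl
  left_distrib := left_distrib'
  right_distrib := fun x y z => by
    show mul (add x y) z = add (mul x z) (mul y z)
    rw [mul_comm', left_distrib', mul_comm' z x, mul_comm' z y]
  nsmul := nsmulRec

/-- Membership in the ghost part `𝕌̄ = 𝕌 ∪ {-∞}` of `𝕋`. -/
def isGhost : T → Prop
  | none => True
  | some (_, s) => s = true

/-- Membership in the tangible part `ℝ ∪ {-∞}` of `𝕋`. -/
def isTangible : T → Prop
  | none => True
  | some (_, s) => s = false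

/-- The underlying real value (junk value `0` at `-∞`); this is `π` on elements `≠ -∞`. -/
def val : T → ℝ
  | none => 0
  | some (a, _) => a

/-- The ghost map `ν`. -/
def nu : T → T
  | none => none
  | some (a, _) => some (a, true)

end T

namespace T

/-- The model value in the half line `[0,∞)`: `-∞ ↦ 0`, an element of value `a ↦ exp a`. -/
noncomputable def gval : T → ℝ
  | none => 0
  | some (a, _) => Real.exp a

lemma nu_isGhost : ∀ x : T, isGhost (nu x)
  | none => trivial
  | some (_, _) => rfl

lemma gval_injOn_tang : Set.InjOn gval {x : T | isTangible x} := by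
  rintro (_ | ⟨a, s⟩) hx (_ | ⟨b, t⟩) hy h <;>
    simp only [gval, Set.mem_setOf_eq, isTangible] at hx hy h
  · rfl
  · exact absurd h.symm (Real.exp_pos b).ne'
  · exact absurd h (Real.exp_pos a).ne'
  · rw [Real.exp_eq_exp] at h; subst hx; subst hy; subst h; rfl

lemma gval_injOn_ghost : Set.InjOn gval {x : T | isGhost x} := by
  rintro (_ | ⟨a, s⟩) hx (_ | ⟨b, t⟩) hy h <;>
    simp only [gval, Set.mem_setOf_eq, isGhost] at hx hy h
  · rfl
  · exact absurd h.symm (Real.exp_pos b).ne'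
  · exact absurd h (Real.exp_pos a).ne'
  · rw [Real.exp_eq_exp] at h; subst hx; subst hy; subst h; rfl

lemma gval_image_tang : gval '' {x : T | isTangible x} = Set.Ici 0 := by
  ext y
  constructor
  · rintro ⟨(_ | ⟨a, s⟩), hx, rfl⟩
    · exact Set.self_mem_Ici
    · exact le_of_lt (by simpa [gval] using Real.exp_pos a)
  · intro hy
    rcases eq_or_lt_of_le (Set.mem_Ici.mp hy : (0 : ℝ) ≤ y) with h | h
    · exact ⟨none, trivial, h⟩
    · exact ⟨some (Real.log y, false), rfl, by simp [gval, Real.exp_log h]⟩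

lemma gval_image_ghost : gval '' {x : T | isGhost x} = Set.Ici 0 := by
  ext y
  constructor
  · rintro ⟨(_ | ⟨a, s⟩), hx, rfl⟩
    · exact Set.self_mem_Ici
    · exact le_of_lt (by simpa [gval] using Real.exp_pos a)
  · intro hy
    rcases eq_or_lt_of_le (Set.mem_Ici.mp hy : (0 : ℝ) ≤ y) with h | h
    · exact ⟨none, trivial, h⟩
    · exact ⟨some (Real.log y, true), rfl, by simp [gval, Real.exp_log h]⟩

/-- The closed sets of the topology on `𝕋`: both the tangible and the ghost layers are
closed in the model `[0,∞)` of `𝕌̄`, and the ghost image of the tangible layer is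
contained in the set. -/
def TIsClosed (W : Set T) : Prop :=
  IsClosed (gval '' (W ∩ {x | isTangible x})) ∧
  IsClosed (gval '' (W ∩ {x | isGhost x})) ∧
  nu '' (W ∩ {x | isTangible x}) ⊆ W ∩ {x | isGhost x}

/-- The topology on `𝕋`. -/
noncomputable instance : TopologicalSpace T :=
  TopologicalSpace.ofClosed {W | TIsClosed W}
    (by
      refine ⟨?_, ?_, ?_⟩ <;> simp [TIsClosed])
    (fun A hA => by
      rcases A.eq_empty_or_nonempty with rfl | hne
      · rw [Set.sInter_empty]
        refine ⟨?_, ?_, ?_⟩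
        · rw [Set.univ_inter, gval_image_tang]; exact isClosed_Ici
        · rw [Set.univ_inter, gval_image_ghost]; exact isClosed_Ici
        · rintro y ⟨x, ⟨-, _⟩, rfl⟩
          exact ⟨trivial, nu_isGhost x⟩
      · have : Nonempty A := hne.to_subtype
        have h1 : (⋂₀ A) ∩ {x : T | isTangible x}
            = ⋂ (W : A), ((W : Set T) ∩ {x | isTangible x}) := by
          ext x
          simp only [Set.mem_inter_iff, Set.mem_sInter, Set.mem_iInter, Set.mem_setOf_eq]
          constructor
          · rintro ⟨h, ht⟩ W; exact ⟨h W W.2, ht⟩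
          · intro h
            obtain ⟨W, hW⟩ := hne
            exact ⟨fun V hV => (h ⟨V, hV⟩).1, (h ⟨W, hW⟩).2⟩
        have h2 : (⋂₀ A) ∩ {x : T | isGhost x}
            = ⋂ (W : A), ((W : Set T) ∩ {x | isGhost x}) := by
          ext x
          simp only [Set.mem_inter_iff, Set.mem_sInter, Set.mem_iInter, Set.mem_setOf_eq]
          constructor
          · rintro ⟨h, ht⟩ W; exact ⟨h W W.2, ht⟩
          · intro h
            obtain ⟨W, hW⟩ := hne
            exact ⟨fun V hV => (h ⟨V, hV⟩).1, (h ⟨W, hW⟩).2⟩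
        refine ⟨?_, ?_, ?_⟩
        · rw [h1, Set.InjOn.image_iInter_eq
            (gval_injOn_tang.mono (Set.iUnion_subset fun W => Set.inter_subset_right))]
          exact isClosed_iInter fun W => (hA W.2).1
        · rw [h2, Set.InjOn.image_iInter_eq
            (gval_injOn_ghost.mono (Set.iUnion_subset fun W => Set.inter_subset_right))]
          exact isClosed_iInter fun W => (hA W.2).2.1
        · rintro y ⟨x, ⟨hx, hxt⟩, rfl⟩
          refine ⟨fun W hW => ((hA hW).2.2 ⟨x, ⟨hx W hW, hxt⟩, rfl⟩).1, nu_isGhost x⟩)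
    (fun A hA B hB => by
      have h1 : (A ∪ B) ∩ {x : T | isTangible x}
          = (A ∩ {x | isTangible x}) ∪ (B ∩ {x | isTangible x}) :=
        Set.union_inter_distrib_right A B _
      have h2 : (A ∪ B) ∩ {x : T | isGhost x}
          = (A ∩ {x | isGhost x}) ∪ (B ∩ {x | isGhost x}) :=
        Set.union_inter_distrib_right A B _
      refine ⟨?_, ?_, ?_⟩
      · rw [h1, Set.image_union]; exact hA.1.union hB.1
      · rw [h2, Set.image_union]; exact hA.2.1.union hB.2.1
      · rintro y ⟨x, ⟨hx, hxt⟩, rfl⟩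
        rcases hx with hxA | hxB
        · have h := hA.2.2 ⟨x, ⟨hxA, hxt⟩, rfl⟩
          exact ⟨Or.inl h.1, h.2⟩
        · have h := hB.2.2 ⟨x, ⟨hxB, hxt⟩, rfl⟩
          exact ⟨Or.inr h.1, h.2⟩)

end T

/-!
Evaluate `f` at a ghost point `t^ν`. As `f` has no constant monomial, every monomial
`c_i (t^ν)^i` is ghost, so `f(t^ν)` is the ghost element of value `max_i (val c_i + i t)`,
the maximum over the support of `f`. This is a continuous function of `t` built from affine
pieces of positive slope, hence it takes the value `a`.
-/

namespace T

/-- `val` with `-∞ ↦ ⊥` instead of a junk value: it turns `+` into `max` and `*` into `+`. -/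
def valBot : T → WithBot ℝ
  | none => ⊥
  | some (a, _) => a

lemma valBot_one : valBot 1 = 0 := rfl

lemma valBot_ghost (t : ℝ) : valBot (ghost t) = t := rfl

lemma valBot_of_ne_zero {x : T} (hx : x ≠ 0) : valBot x = val x := by
  rcases x with _ | ⟨a, s⟩
  · exact absurd rfl hx
  · rfl

lemma valBot_add (x y : T) : valBot (x + y) = max (valBot x) (valBot y) := by
  show valBot (add x y) = _
  rcases x with _ | ⟨a, s⟩ <;> rcases y with _ | ⟨b, t⟩
  · rfl
  · exact (bot_sup_eq _).symm
  · exact (sup_bot_eq _).symm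
  · simp only [add]
    unfold T
    split_ifs with hab hba
    · exact (max_eq_right (WithBot.coe_le_coe.2 hab.le)).symm
    · exact (max_eq_left (WithBot.coe_le_coe.2 hba.le)).symm
    · obtain rfl := le_antisymm (not_lt.1 hba) (not_lt.1 hab)
      exact (max_self (a : WithBot ℝ)).symm

lemma valBot_mul (x y : T) : valBot (x * y) = valBot x + valBot y := by
  rcases x with _ | ⟨a, s⟩ <;> rcases y with _ | ⟨b, t⟩
  · rfl
  · rfl
  · exact (WithBot.add_bot _).symm
  · exact WithBot.coe_add a b

lemma valBot_pow (x : T) (n : ℕ) : valBot (x ^ n) = n • valBot x := by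
  induction n with
  | zero => rw [pow_zero, zero_nsmul, valBot_one]
  | succ n ih => rw [pow_succ, valBot_mul, ih, succ_nsmul]

lemma valBot_sum {ι : Type*} (s : Finset ι) (F : ι → T) :
    valBot (∑ i ∈ s, F i) = s.sup fun i => valBot (F i) := by
  induction s using Finset.cons_induction with
  | empty => rfl
  | cons i s _ ih => rw [Finset.sum_cons, Finset.sup_cons, valBot_add, ih]

lemma valBot_coeff_mul_ghost_pow {c : T} (hc : c ≠ 0) (t : ℝ) (n : ℕ) :
    valBot (c * ghost t ^ n) = ((val c + n * t : ℝ) : WithBot ℝ) := by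
  rw [valBot_mul, valBot_pow, valBot_of_ne_zero hc, valBot_ghost, ← WithBot.coe_nsmul,
    nsmul_eq_mul, ← WithBot.coe_add]

lemma isGhost_ghost (t : ℝ) : isGhost (ghost t) := rfl

lemma isGhost_add {x y : T} (hx : isGhost x) (hy : isGhost y) : isGhost (x + y) := by
  show isGhost (add x y)
  rcases x with _ | ⟨a, s⟩ <;> rcases y with _ | ⟨b, t⟩
  · trivial
  · exact hy
  · exact hx
  · simp only [add]
    unfold T
    split_ifs
    exacts [hy, hx, rfl]

lemma isGhost_mul_of_right (x : T) {y : T} (hy : isGhost y) : isGhost (x * y) := by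
  rcases x with _ | ⟨a, s⟩ <;> rcases y with _ | ⟨b, t⟩
  · trivial
  · trivial
  · trivial
  · exact (Bool.or_eq_true s t).mpr (Or.inr hy)

lemma isGhost_pow {x : T} (hx : isGhost x) {n : ℕ} (hn : n ≠ 0) : isGhost (x ^ n) := by
  obtain ⟨m, rfl⟩ := Nat.exists_eq_succ_of_ne_zero hn
  rw [pow_succ]
  exact isGhost_mul_of_right _ hx

lemma isGhost_sum {ι : Type*} (s : Finset ι) {F : ι → T} (hF : ∀ i ∈ s, isGhost (F i)) :
    isGhost (∑ i ∈ s, F i) :=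
  Finset.sum_induction F isGhost (fun _ _ => isGhost_add) trivial hF

lemma eq_ghost_of_isGhost {x : T} (hx : isGhost x) {a : ℝ} (hxa : valBot x = a) :
    x = ghost a := by
  rcases x with _ | ⟨b, s⟩
  · exact absurd hxa WithBot.bot_ne_coe
  · have hs : s = true := hx
    rw [WithBot.coe_inj.1 hxa, hs]
    rfl

lemma isGhost_eval_ghost {f : Polynomial T} (h0 : f.coeff 0 = 0) (t : ℝ) :
    isGhost (f.eval (ghost t)) := by
  rw [Polynomial.eval_eq_sum]
  refine isGhost_sum _ fun i hi => isGhost_mul_of_right _ (isGhost_pow (isGhost_ghost t) ?_)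
  rintro rfl
  exact Polynomial.mem_support_iff.1 hi h0

lemma valBot_eval_ghost (f : Polynomial T) (t : ℝ) :
    valBot (f.eval (ghost t)) =
      f.support.sup fun i => ((val (f.coeff i) + i * t : ℝ) : WithBot ℝ) := by
  rw [Polynomial.eval_eq_sum, Polynomial.sum_def, valBot_sum]
  exact Finset.sup_congr rfl fun i hi =>
    valBot_coeff_mul_ghost_pow (Polynomial.mem_support_iff.1 hi) t i

end T

open Filter in
lemma Finset.surjective_sup'_affine {ι : Type*} (s : Finset ι) (hs : s.Nonempty)
    (c m : ι → ℝ) (hm : ∀ i ∈ s, 0 < m i) :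
    Function.Surjective fun t : ℝ => s.sup' hs fun i => c i + m i * t := by
  have hcont : Continuous fun t : ℝ => s.sup' hs fun i => c i + m i * t :=
    Continuous.finset_sup'_apply hs fun i _ => by fun_prop
  obtain ⟨j, hj⟩ := hs
  refine hcont.surjective ?_ ?_
  · refine tendsto_atTop_mono (fun t => s.le_sup' (fun i => c i + m i * t) hj) ?_
    exact tendsto_atTop_add_const_left _ _ (tendsto_id.const_mul_atTop (hm j hj))
  · refine tendsto_atBot.2 fun b => ?_
    have hterm : ∀ i ∈ s, ∀ᶠ t in atBot, c i + m i * t ≤ b := fun i hi =>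
      (tendsto_atBot_add_const_left _ _
        (tendsto_id.const_mul_atBot (hm i hi))).eventually_le_atBot b
    exact (s.eventually_all.2 hterm).mono fun t ht => Finset.sup'_le _ _ ht

/-- Lemma 1.1 / `lem:cl1`: if `f ∈ 𝕋[x]` is a nonconstant polynomial
with no constant monomial (constant coefficient `-∞`), then for every real `a` there is
`r ∈ 𝕋` with `f(r) = a^ν`. -/
theorem tropical_ghost_value_attained (f : Polynomial T)
    (hnc : ∀ c : T, f ≠ Polynomial.C c) (h0 : f.coeff 0 = 0) (a : ℝ) :
    ∃ r : T, f.eval r = T.ghost a := by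
  have hsupp : f.support.Nonempty :=
    Polynomial.support_nonempty.2 fun hf => hnc 0 (by rw [hf, map_zero])
  have hpos : ∀ i ∈ f.support, (0 : ℝ) < i := fun i hi =>
    Nat.cast_pos.2 (Nat.pos_of_ne_zero fun hi0 => Polynomial.mem_support_iff.1 hi (hi0 ▸ h0))
  obtain ⟨t, ht⟩ := f.support.surjective_sup'_affine hsupp _ _ hpos a
  refine ⟨T.ghost t, T.eq_ghost_of_isGhost (T.isGhost_eval_ghost h0 t) ?_⟩
  rw [T.valBot_eval_ghost, ← ht, Finset.coe_sup']
  rfl
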